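/- arXiv:1901.05832 — 2 statements merged into one kernel-verified Lean document; each statement's English description precedes it below -/
import Mathlib

section
/- Let n ≥ 2. The measure ν is a nonzero finite Borel measure on ℝⁿ × ℝ which is concentrated on the light cone B = {(x,t) : |x| = t}, and its Fourier transform ν̂ belongs to C₀(ℝ^{n+1}), i.e. ν̂(y,t) → 0 as |(y,t)| → ∞. (In particular the light cone B is a set of multiplicity of type M₁ in ℝ^{n+1}.) -/
open MeasureTheory Filter Topology Metric
open scoped RealInnerProductSpace ENNReal

/-- The measure `ν` on `ℝⁿ × ℝ`: the pushforward of `μ ⊗ (s^{n-1} a(s) ds on (0,∞))`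
under `(x, s) ↦ (s • x, s)`, where `μ` is a measure on `ℝⁿ` (the normalized surface
measure on the unit sphere) and `a` is a smooth bump function. -/
noncomputable def coneMeasure (n : ℕ) (μ : Measure (EuclideanSpace ℝ (Fin n)))
    (a : ℝ → ℝ) : Measure (EuclideanSpace ℝ (Fin n) × ℝ) :=
  Measure.map (fun p : EuclideanSpace ℝ (Fin n) × ℝ => (p.2 • p.1, p.2))
    (μ.prod ((volume.restrict (Set.Ioi (0 : ℝ))).withDensity
      (fun s => ENNReal.ofReal (s ^ (n - 1) * a s))))

/-- The Fourier transform of a finite Borel measure `σ` on `ℝⁿ × ℝ`, evaluated at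
`(y, t)`: `σ̂(y,t) = ∫ e^{-2πi(⟨y,x⟩ + t s)} dσ(x,s)`. -/
noncomputable def fourierMeasureProd (n : ℕ)
    (σ : Measure (EuclideanSpace ℝ (Fin n) × ℝ))
    (q : EuclideanSpace ℝ (Fin n) × ℝ) : ℂ :=
  ∫ p, Complex.exp (-(2 * Real.pi * Complex.I) * ((⟪q.1, p.1⟫ + q.2 * p.2 : ℝ) : ℂ)) ∂σ


lemma aux_null_of_pairwise_ae_disjoint {α : Type*} [MeasurableSpace α] (μ : Measure α)
    [IsFiniteMeasure μ] (S : ℕ → Set α) (hm : ∀ i, MeasurableSet (S i)) {c : ℝ≥0∞}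
    (hc : ∀ i, μ (S i) = c) (hd : ∀ i j, i ≠ j → μ (S i ∩ S j) = 0) : c = 0 := by
  by_contra hne
  set T : ℕ → Set α := fun i => S i \ ⋃ j < i, S j with hT
  have hTm : ∀ i, MeasurableSet (T i) := fun i =>
    (hm i).diff (MeasurableSet.biUnion (Set.to_countable _) fun j _ => hm j)
  have hTc : ∀ i, μ (T i) = c := by
    intro i
    have h0 : μ (S i ∩ ⋃ j < i, S j) = 0 := by
      have he : S i ∩ ⋃ j < i, S j = ⋃ j < i, S i ∩ S j := by
        ext x; simp only [Set.mem_inter_iff, Set.mem_iUnion]; tauto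
      rw [he]
      exact (measure_biUnion_null_iff (Set.to_countable _)).2
        (fun j hj => hd i j (Nat.ne_of_gt hj))
    have he2 : T i = S i \ (S i ∩ ⋃ j < i, S j) := by
      simp only [hT]; ext x; simp only [Set.mem_diff, Set.mem_inter_iff]; tauto
    rw [he2, measure_diff_null h0, hc]
  have hdisj : Pairwise (Function.onFun Disjoint T) := by
    intro i j hij
    rcases hij.lt_or_gt with h | h
    · exact Set.disjoint_left.2 fun x hxi hxj =>
        hxj.2 (Set.mem_iUnion₂.2 ⟨i, h, hxi.1⟩)
    · exact Set.disjoint_left.2 fun x hxi hxj =>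
        hxi.2 (Set.mem_iUnion₂.2 ⟨j, h, hxj.1⟩)
  have hU := measure_iUnion (μ := μ) hdisj hTm
  simp only [hTc] at hU
  have h1 : (∑' _ : ℕ, c) = ⊤ := ENNReal.tsum_const_eq_top_of_ne_zero hne
  exact (measure_lt_top μ (⋃ i, T i)).ne (hU.trans h1)

noncomputable def auxC (k : ℕ) : ℝ × ℝ :=
  ((1 - (k:ℝ)^2) / (1 + (k:ℝ)^2), 2 * (k:ℝ) / (1 + (k:ℝ)^2))

lemma auxC_pos (k : ℕ) : (0:ℝ) < 1 + (k:ℝ)^2 := by positivity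

lemma auxC_unit (k : ℕ) : (auxC k).1 ^ 2 + (auxC k).2 ^ 2 = 1 := by
  have h := (auxC_pos k).ne'
  simp only [auxC]
  field_simp
  ring

lemma auxC_det {j k : ℕ} (h : j ≠ k) :
    (auxC j).1 * (auxC k).2 - (auxC j).2 * (auxC k).1 ≠ 0 := by
  have hj := (auxC_pos j).ne'
  have hk := (auxC_pos k).ne'
  simp only [auxC]
  have hne : (j:ℝ) ≠ (k:ℝ) := Nat.cast_injective.ne h
  have h1 : (0:ℝ) < 1 + (j:ℝ)*(k:ℝ) := by positivity
  field_simp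
  intro hc
  apply hne
  have hd : (0:ℝ) < (1 + (j:ℝ)^2) * (1 + (k:ℝ)^2) := by positivity
  rcases (div_eq_zero_iff.1 hc) with hc | hc
  · have h2 : ((k:ℝ) - j) * (1 + j*k) = 0 := by linear_combination hc/2
    have := (mul_eq_zero.1 h2).resolve_right h1.ne'
    linarith
  · exact absurd hc hd.ne'

lemma auxC_ne {j k : ℕ} (h : j ≠ k) : auxC j ≠ auxC k := by
  intro hc
  have h1 := congrArg Prod.fst hc
  have h2 := congrArg Prod.snd hc
  simp only [auxC] at h1 h2
  have hj := (auxC_pos j).ne'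
  have hk := (auxC_pos k).ne'
  have hne : (j:ℝ) ≠ (k:ℝ) := Nat.cast_injective.ne h
  apply hne
  field_simp at h1 h2
  nlinarith [h1, h2, sq_nonneg ((j:ℝ) - k), sq_nonneg ((j:ℝ) + k)]

abbrev Esp (n : ℕ) := EuclideanSpace ℝ (Fin n)

section Geom
variable {n : ℕ} (μ : Measure (Esp n))
variable (hμ_rot : ∀ O : Esp n ≃ₗᵢ[ℝ] Esp n, Measure.map O μ = μ)

include hμ_rot in
lemma aux_inv (O : Esp n ≃ₗᵢ[ℝ] Esp n) {S : Set (Esp n)} (hS : MeasurableSet S) :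
    μ (O ⁻¹' S) = μ S := by
  conv_rhs => rw [← hμ_rot O]
  rw [Measure.map_apply O.continuous.measurable hS]

lemma aux_inner_cont (v : Esp n) : Continuous (fun x : Esp n => ⟪v, x⟫) :=
  continuous_const.inner continuous_id

lemma aux_meas_inner_eq (v : Esp n) (u : ℝ) : MeasurableSet {x : Esp n | ⟪v, x⟫ = u} :=
  (isClosed_eq (aux_inner_cont v) continuous_const).measurableSet

lemma aux_meas_inner_mem (v : Esp n) {B : Set ℝ} (hB : MeasurableSet B) :
    MeasurableSet {x : Esp n | ⟪v, x⟫ ∈ B} :=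
  (aux_inner_cont v).measurable hB

end Geom


noncomputable def ev {n : ℕ} (i : Fin n) : Esp n := EuclideanSpace.single i 1

lemma ev_inner {n : ℕ} (i : Fin n) (x : Esp n) : ⟪ev i, x⟫ = x i := by
  simp [ev, EuclideanSpace.inner_single_left]

noncomputable def fvec {n : ℕ} (i j : Fin n) (c : ℝ × ℝ) : Esp n :=
  c.1 • ev i + c.2 • ev j

lemma fvec_inner {n : ℕ} (i j : Fin n) (c : ℝ × ℝ) (x : Esp n) :
    ⟪fvec i j c, x⟫ = c.1 * x i + c.2 * x j := by
  rw [fvec, inner_add_left, real_inner_smul_left, real_inner_smul_left, ev_inner, ev_inner]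

lemma fvec_norm {n : ℕ} {i j : Fin n} (hij : i ≠ j) {c : ℝ × ℝ}
    (hc : c.1 ^ 2 + c.2 ^ 2 = 1) : ‖fvec i j c‖ = 1 := by
  have h : ⟪fvec i j c, fvec i j c⟫ = 1 := by
    rw [fvec_inner]
    simp only [fvec, ev]
    simp [EuclideanSpace.single_apply, hij, Ne.symm hij]
    nlinarith [hc]
  have := real_inner_self_eq_norm_sq (fvec i j c)
  nlinarith [norm_nonneg (fvec i j c), this, h]

lemma fvec_orth {n : ℕ} {i j : Fin n} (hij : i ≠ j) (c : ℝ × ℝ) :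
    ⟪fvec i j c, fvec i j (-c.2, c.1)⟫ = 0 := by
  rw [fvec_inner]
  simp only [fvec, ev]
  simp [EuclideanSpace.single_apply, hij, Ne.symm hij]
  ring


variable {F : Type*} [NormedAddCommGroup F] [InnerProductSpace ℝ F] [FiniteDimensional ℝ F]

lemma aux_exists_isometry_single (u v : F) (h : ‖u‖ = ‖v‖) :
    ∃ O : F ≃ₗᵢ[ℝ] F, O u = v ∧ ∀ w, ⟪u - v, w⟫ = 0 → O w = w := by
  refine ⟨Submodule.reflection (ℝ ∙ (u - v))ᗮ, Submodule.reflection_sub h, fun w hw => ?_⟩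
  exact Submodule.reflection_mem_subspace_eq_self
    (Submodule.mem_orthogonal_singleton_iff_inner_right.2 hw)

lemma aux_exists_isometry_pair (u₁ u₂ v₁ v₂ : F) (hu1 : ‖u₁‖ = 1) (hu2 : ‖u₂‖ = 1)
    (hv1 : ‖v₁‖ = 1) (hv2 : ‖v₂‖ = 1) (hu : ⟪u₁, u₂⟫ = 0) (hv : ⟪v₁, v₂⟫ = 0) :
    ∃ O : F ≃ₗᵢ[ℝ] F, O u₁ = v₁ ∧ O u₂ = v₂ := by
  obtain ⟨O₁, hO₁, _⟩ := aux_exists_isometry_single u₁ v₁ (by rw [hu1, hv1])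
  set w := O₁ u₂ with hw
  have hnw : ‖w‖ = 1 := by rw [hw, O₁.norm_map, hu2]
  have hvw : ⟪v₁, w⟫ = 0 := by
    rw [hw, ← hO₁, O₁.inner_map_map, hu]
  obtain ⟨O₂, hO₂, hfix⟩ := aux_exists_isometry_single w v₂ (by rw [hnw, hv2])
  refine ⟨O₁.trans O₂, ?_, ?_⟩
  · have : O₂ v₁ = v₁ := hfix v₁ (by rw [inner_sub_left, real_inner_comm, hvw,
      real_inner_comm, hv, sub_zero])
    simp [LinearIsometryEquiv.trans_apply, hO₁, this]
  · simp [LinearIsometryEquiv.trans_apply, ← hw, hO₂]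

section PointNull
variable {n : ℕ} (μ : Measure (Esp n))
variable (hμ_rot : ∀ O : Esp n ≃ₗᵢ[ℝ] Esp n, Measure.map O μ = μ)

def Dset {n : ℕ} (v w : Esp n) (p : ℝ × ℝ) : Set (Esp n) :=
  {x | ⟪v, x⟫ = p.1 ∧ ⟪w, x⟫ = p.2}

lemma Dset_meas {n : ℕ} (v w : Esp n) (p : ℝ × ℝ) : MeasurableSet (Dset v w p) :=
  (aux_meas_inner_eq v p.1).inter (aux_meas_inner_eq w p.2)

include hμ_rot in
lemma Dset_inv {v w v' w' : Esp n} (hv : ‖v‖ = 1) (hw : ‖w‖ = 1) (hv' : ‖v'‖ = 1)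
    (hw' : ‖w'‖ = 1) (ho : ⟪v, w⟫ = 0) (ho' : ⟪v', w'⟫ = 0) (p : ℝ × ℝ) :
    μ (Dset v w p) = μ (Dset v' w' p) := by
  obtain ⟨O, hO1, hO2⟩ := aux_exists_isometry_pair v' w' v w hv' hw' hv hw ho' ho
  have : O ⁻¹' (Dset v w p) = Dset v' w' p := by
    ext x
    simp only [Dset, Set.mem_preimage, Set.mem_setOf_eq]
    rw [← hO1, ← hO2, O.inner_map_map, O.inner_map_map]
  rw [← this, aux_inv μ hμ_rot O (Dset_meas v w p)]

include hμ_rot in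
lemma aux_point_null [IsFiniteMeasure μ] {i j : Fin n} (hij : i ≠ j) {p : ℝ × ℝ}
    (hp : p ≠ 0) : μ {x : Esp n | x i = p.1 ∧ x j = p.2} = 0 := by
  set S : ℕ → Set (Esp n) := fun k =>
    Dset (fvec i j (auxC k)) (fvec i j (-(auxC k).2, (auxC k).1)) p with hS
  have horth : ∀ k : ℕ, ‖fvec i j (auxC k)‖ = 1 ∧
      ‖fvec i j (-(auxC k).2, (auxC k).1)‖ = 1 ∧
      ⟪fvec i j (auxC k), fvec i j (-(auxC k).2, (auxC k).1)⟫ = 0 := fun k =>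
    ⟨fvec_norm hij (auxC_unit k), fvec_norm hij (by simpa [add_comm] using auxC_unit k),
      fvec_orth hij (auxC k)⟩
  have hceq : ∀ k, μ (S k) = μ (S 0) := by
    intro k
    exact Dset_inv μ hμ_rot (horth k).1 (horth k).2.1 (horth 0).1 (horth 0).2.1
      (horth k).2.2 (horth 0).2.2 p
  -- membership forces coordinates
  have hmem : ∀ k (x : Esp n), x ∈ S k →
      x i = (auxC k).1 * p.1 - (auxC k).2 * p.2 ∧
      x j = (auxC k).2 * p.1 + (auxC k).1 * p.2 := by
    intro k x hx
    obtain ⟨h1, h2⟩ := hx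
    rw [fvec_inner] at h1 h2
    have h2' : -(auxC k).2 * x i + (auxC k).1 * x j = p.2 := h2
    have hu := auxC_unit k
    constructor
    · linear_combination (auxC k).1 * h1 - (auxC k).2 * h2' - x i * hu
    · linear_combination (auxC k).2 * h1 + (auxC k).1 * h2' - x j * hu
  have hdisj : ∀ k l, k ≠ l → μ (S k ∩ S l) = 0 := by
    intro k l hkl
    convert measure_empty (μ := μ)
    ext x
    simp only [Set.mem_inter_iff, Set.mem_empty_iff_false, iff_false]
    rintro ⟨hxk, hxl⟩
    obtain ⟨hk1, hk2⟩ := hmem k x hxk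
    obtain ⟨hl1, hl2⟩ := hmem l x hxl
    have hcd : auxC k ≠ auxC l := auxC_ne hkl
    have hne : (auxC k).1 ≠ (auxC l).1 ∨ (auxC k).2 ≠ (auxC l).2 := by
      by_contra hcon
      push_neg at hcon
      exact hcd (Prod.ext hcon.1 hcon.2)
    have hpp : p.1 ≠ 0 ∨ p.2 ≠ 0 := by
      by_contra hcon
      push_neg at hcon
      exact hp (Prod.ext hcon.1 hcon.2)
    set A := (auxC k).1 - (auxC l).1
    set B := (auxC k).2 - (auxC l).2
    have e1 : A * p.1 - B * p.2 = 0 := by simp only [A, B]; linear_combination hl1 - hk1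
    have e2 : B * p.1 + A * p.2 = 0 := by simp only [A, B]; linear_combination hl2 - hk2
    have hAB : 0 < A ^ 2 + B ^ 2 := by
      rcases hne with h | h
      · have : A ≠ 0 := sub_ne_zero.2 h
        positivity
      · have : B ≠ 0 := sub_ne_zero.2 h
        positivity
    have hp1 : (A ^ 2 + B ^ 2) * p.1 = 0 := by linear_combination A * e1 + B * e2
    have hp2 : (A ^ 2 + B ^ 2) * p.2 = 0 := by linear_combination (-B) * e1 + A * e2
    rcases hpp with h | h
    · exact h ((mul_eq_zero.1 hp1).resolve_left hAB.ne')
    · exact h ((mul_eq_zero.1 hp2).resolve_left hAB.ne')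
  have h0 : μ (S 0) = 0 :=
    aux_null_of_pairwise_ae_disjoint μ S
      (fun k => Dset_meas _ _ _) hceq hdisj
  have : {x : Esp n | x i = p.1 ∧ x j = p.2} = S 0 := by
    ext x
    simp only [hS, Dset, Set.mem_setOf_eq, fvec_inner, auxC]
    norm_num
  rw [this, h0]

end PointNull

lemma ev_apply {n : ℕ} (i j : Fin n) : (ev i) j = if j = i then 1 else 0 := by
  simp [ev, EuclideanSpace.single_apply]

section HypNull
variable {n : ℕ} (μ : Measure (Esp n))
variable (hμ_rot : ∀ O : Esp n ≃ₗᵢ[ℝ] Esp n, Measure.map O μ = μ)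

include hμ_rot in
lemma Hset_inv {v v' : Esp n} (hv : ‖v‖ = 1) (hv' : ‖v'‖ = 1) {B : Set ℝ}
    (hB : MeasurableSet B) : μ {x | ⟪v, x⟫ ∈ B} = μ {x | ⟪v', x⟫ ∈ B} := by
  obtain ⟨O, hO1, -⟩ := aux_exists_isometry_single v' v (by rw [hv, hv'])
  have : O ⁻¹' {x | ⟪v, x⟫ ∈ B} = {x | ⟪v', x⟫ ∈ B} := by
    ext x
    simp only [Set.mem_preimage, Set.mem_setOf_eq]
    rw [← hO1, O.inner_map_map]
  rw [← this, aux_inv μ hμ_rot O (aux_meas_inner_mem v hB)]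

include hμ_rot in
lemma aux_coord_null_ne [IsFiniteMeasure μ] (hn : 2 ≤ n) {u : ℝ} (hu : u ≠ 0) :
    μ {x : Esp n | x ⟨0, by omega⟩ = u} = 0 := by
  set i0 : Fin n := ⟨0, by omega⟩
  set i1 : Fin n := ⟨1, by omega⟩
  have hij : i0 ≠ i1 := by simp [i0, i1, Fin.ext_iff]
  set S : ℕ → Set (Esp n) := fun k => {x | ⟪fvec i0 i1 (auxC k), x⟫ = u} with hS
  have hmeas : ∀ k, MeasurableSet (S k) := fun k => aux_meas_inner_eq _ u
  have hceq : ∀ k, μ (S k) = μ (S 0) := by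
    intro k
    have h1 : {x : Esp n | ⟪fvec i0 i1 (auxC k), x⟫ = u}
        = {x | ⟪fvec i0 i1 (auxC k), x⟫ ∈ ({u} : Set ℝ)} := by
      ext x; simp
    have h2 : {x : Esp n | ⟪fvec i0 i1 (auxC 0), x⟫ = u}
        = {x | ⟪fvec i0 i1 (auxC 0), x⟫ ∈ ({u} : Set ℝ)} := by
      ext x; simp
    rw [hS]
    simp only
    rw [h1, h2]
    exact Hset_inv μ hμ_rot (fvec_norm hij (auxC_unit k)) (fvec_norm hij (auxC_unit 0))
      (measurableSet_singleton u)
  have hdisj : ∀ k l, k ≠ l → μ (S k ∩ S l) = 0 := by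
    intro k l hkl
    set c := auxC k
    set d := auxC l
    set det := c.1 * d.2 - c.2 * d.1 with hdet
    have hdne : det ≠ 0 := auxC_det hkl
    set p : ℝ × ℝ := (u * (d.2 - c.2) / det, u * (c.1 - d.1) / det) with hp
    have hpne : p ≠ 0 := by
      intro hc
      have h1 : u * (d.2 - c.2) / det = 0 := congrArg Prod.fst hc
      have h2 : u * (c.1 - d.1) / det = 0 := congrArg Prod.snd hc
      rw [div_eq_zero_iff] at h1 h2
      have e1 : u * (d.2 - c.2) = 0 := h1.resolve_right hdne
      have e2 : u * (c.1 - d.1) = 0 := h2.resolve_right hdne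
      have f1 : d.2 = c.2 := by
        rcases mul_eq_zero.1 e1 with h | h
        · exact absurd h hu
        · linarith
      have f2 : c.1 = d.1 := by
        rcases mul_eq_zero.1 e2 with h | h
        · exact absurd h hu
        · linarith
      exact hdne (by rw [hdet, f1, f2]; ring)
    refine measure_mono_null ?_ (aux_point_null μ hμ_rot hij hpne)
    rintro x ⟨hxk, hxl⟩
    have h1 : c.1 * x i0 + c.2 * x i1 = u := by
      have := hxk; rwa [hS, Set.mem_setOf_eq, fvec_inner] at this
    have h2 : d.1 * x i0 + d.2 * x i1 = u := by
      have := hxl; rwa [hS, Set.mem_setOf_eq, fvec_inner] at this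
    have g1 : det * x i0 = u * (d.2 - c.2) := by
      rw [hdet]; linear_combination d.2 * h1 - c.2 * h2
    have g2 : det * x i1 = u * (c.1 - d.1) := by
      rw [hdet]; linear_combination (-d.1) * h1 + c.1 * h2
    constructor
    · rw [hp]; field_simp; linear_combination g1
    · rw [hp]; field_simp; linear_combination g2
  have h0 : μ (S 0) = 0 :=
    aux_null_of_pairwise_ae_disjoint μ S hmeas hceq hdisj
  have : {x : Esp n | x i0 = u} = S 0 := by
    ext x
    rw [hS]
    simp only [Set.mem_setOf_eq, fvec_inner, auxC]
    norm_num
  rw [this, h0]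

end HypNull

def Mset (n k : ℕ) : Set (Esp n) := {x | ∀ i : Fin n, (i : ℕ) < k → x i = 0}

lemma Mset_meas (n k : ℕ) : MeasurableSet (Mset n k) := by
  have : Mset n k = ⋂ (i : Fin n) (_ : (i:ℕ) < k), {x : Esp n | ⟪ev i, x⟫ = 0} := by
    ext x; simp only [Mset, Set.mem_setOf_eq, Set.mem_iInter, ev_inner]
  rw [this]
  exact MeasurableSet.iInter fun i => MeasurableSet.iInter fun _ => aux_meas_inner_eq _ _

section MNull
variable {n : ℕ} (μ : Measure (Esp n))
variable (hμ_rot : ∀ O : Esp n ≃ₗᵢ[ℝ] Esp n, Measure.map O μ = μ)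

include hμ_rot in
lemma aux_M_step [IsFiniteMeasure μ] (m : ℕ) (h2 : m + 2 ≤ n) :
    μ (Mset n (m + 1)) = μ (Mset n (m + 2)) := by
  set im : Fin n := ⟨m, by omega⟩
  set im1 : Fin n := ⟨m + 1, by omega⟩
  have hij : im ≠ im1 := by simp [im, im1, Fin.ext_iff]
  set S : ℕ → Set (Esp n) := fun k =>
    {x | (∀ i : Fin n, (i : ℕ) < m → x i = 0) ∧ ⟪fvec im im1 (auxC k), x⟫ = 0} with hS
  have hSmeas : ∀ k, MeasurableSet (S k) :=
    fun k => (Mset_meas n m).inter (aux_meas_inner_eq _ _)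
  -- S 0 = Mset n (m+1), and each S k has measure μ (Mset n (m+1))
  have hS0 : S 0 = Mset n (m + 1) := by
    ext x
    simp only [hS, Set.mem_setOf_eq, fvec_inner, auxC, Mset]
    norm_num
    constructor
    · rintro ⟨h1, h2⟩ i hi
      rcases Nat.lt_or_ge (i : ℕ) m with h | h
      · exact h1 i h
      · have : i = im := by apply Fin.ext; simp [im]; omega
        rw [this]; exact h2
    · intro h
      exact ⟨fun i hi => h i (by omega), h im (by simp [im])⟩
  have hSk : ∀ k, μ (S k) = μ (Mset n (m + 1)) := by
    intro k
    obtain ⟨O, hO1, hOfix⟩ := aux_exists_isometry_single (ev im) (fvec im im1 (auxC k))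
      (by rw [fvec_norm hij (auxC_unit k),
            show ev im = EuclideanSpace.single im (1:ℝ) from rfl,
            EuclideanSpace.norm_single]; norm_num)
    have hfix : ∀ i : Fin n, (i : ℕ) < m → O (ev i) = ev i := by
      intro i hi
      apply hOfix
      rw [inner_sub_left, ev_inner, fvec_inner]
      have h1 : i ≠ im := by simp [im, Fin.ext_iff]; omega
      have h2 : i ≠ im1 := by simp [im1, Fin.ext_iff]; omega
      simp [ev_apply, h1, h2, Ne.symm h1, Ne.symm h2]
    have hpre : O ⁻¹' (S k) = Mset n (m + 1) := by
      ext x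
      simp only [hS, Set.mem_preimage, Set.mem_setOf_eq, Mset]
      have key : ∀ i : Fin n, (i : ℕ) < m → (O x) i = x i := by
        intro i hi
        calc (O x) i = ⟪ev i, O x⟫ := (ev_inner i (O x)).symm
          _ = ⟪O (ev i), O x⟫ := by rw [hfix i hi]
          _ = ⟪ev i, x⟫ := O.inner_map_map _ _
          _ = x i := ev_inner i x
      have key2 : ⟪fvec im im1 (auxC k), O x⟫ = x im := by
        rw [← hO1, O.inner_map_map, ev_inner]
      constructor
      · rintro ⟨h1, h2⟩ i hi
        rcases Nat.lt_or_ge (i : ℕ) m with h | h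
        · rw [← key i h]; exact h1 i h
        · have : i = im := by apply Fin.ext; simp [im]; omega
          rw [this, ← key2]; exact h2
      · intro h
        refine ⟨fun i hi => by rw [key i hi]; exact h i (by omega), ?_⟩
        rw [key2]; exact h im (by simp [im])
    rw [← hpre, aux_inv μ hμ_rot O (hSmeas k)]
  -- B is contained in each S k; intersections are exactly B
  set B := Mset n (m + 2) with hB
  have hBsub : ∀ k, B ⊆ S k := by
    intro k x hx
    refine ⟨fun i hi => hx i (by omega), ?_⟩
    rw [fvec_inner, hx im (by simp [im]), hx im1 (by simp [im1])]
    ring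
  have hint : ∀ k l, k ≠ l → S k ∩ S l ⊆ B := by
    intro k l hkl x hx
    obtain ⟨⟨hx1, hk⟩, ⟨-, hl⟩⟩ := hx
    rw [fvec_inner] at hk hl
    have hdne := auxC_det hkl
    have g1 : ((auxC k).1 * (auxC l).2 - (auxC k).2 * (auxC l).1) * x im = 0 := by
      linear_combination (auxC l).2 * hk - (auxC k).2 * hl
    have g2 : ((auxC k).1 * (auxC l).2 - (auxC k).2 * (auxC l).1) * x im1 = 0 := by
      linear_combination (-(auxC l).1) * hk + (auxC k).1 * hl
    have hxm : x im = 0 := by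
      rcases mul_eq_zero.1 g1 with h | h
      · exact absurd h hdne
      · exact h
    have hxm1 : x im1 = 0 := by
      rcases mul_eq_zero.1 g2 with h | h
      · exact absurd h hdne
      · exact h
    intro i hi
    rcases Nat.lt_or_ge (i : ℕ) m with h | h
    · exact hx1 i h
    · rcases Nat.lt_or_ge (i : ℕ) (m + 1) with h' | h'
      · have : i = im := by apply Fin.ext; simp [im]; omega
        rw [this]; exact hxm
      · have : i = im1 := by apply Fin.ext; simp [im1]; omega
        rw [this]; exact hxm1
  -- disjointify
  set T : ℕ → Set (Esp n) := fun k => S k \ B with hT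
  have hTmeas : ∀ k, MeasurableSet (T k) := fun k => (hSmeas k).diff (Mset_meas n _)
  have hTc : ∀ k, μ (T k) = μ (Mset n (m + 1)) - μ B := by
    intro k
    rw [hT]
    simp only
    rw [measure_diff (hBsub k) (Mset_meas n _).nullMeasurableSet (measure_ne_top μ B), hSk k]
  have hTd : ∀ k l, k ≠ l → μ (T k ∩ T l) = 0 := by
    intro k l hkl
    have : T k ∩ T l = ∅ := by
      ext x
      simp only [hT, Set.mem_inter_iff, Set.mem_diff, Set.mem_empty_iff_false, iff_false]
      rintro ⟨⟨hk, hnb⟩, ⟨hl, -⟩⟩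
      exact hnb (hint k l hkl ⟨hk, hl⟩)
    rw [this, measure_empty]
  have hzero : μ (Mset n (m + 1)) - μ B = 0 :=
    aux_null_of_pairwise_ae_disjoint μ T hTmeas hTc hTd
  have hle : μ B ≤ μ (Mset n (m + 1)) := by
    rw [← hS0]; exact measure_mono (hBsub 0)
  have := tsub_eq_zero_iff_le.1 hzero
  exact le_antisymm this hle

include hμ_rot in
lemma aux_coord_null_zero [IsFiniteMeasure μ]
    (hμ_sphere : μ (sphere (0 : Esp n) 1)ᶜ = 0) (hn : 2 ≤ n) :
    μ {x : Esp n | x ⟨0, by omega⟩ = 0} = 0 := by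
  have hbase : μ (Mset n n) = 0 := by
    have hsub : Mset n n ⊆ (sphere (0 : Esp n) 1)ᶜ := by
      intro x hx
      simp only [Set.mem_compl_iff, mem_sphere_iff_norm, sub_zero]
      intro hnorm
      have : x = 0 := by
        ext i
        exact hx i i.isLt
      rw [this] at hnorm
      simp at hnorm
    exact measure_mono_null hsub hμ_sphere
  have hchain : ∀ j, 1 ≤ j → j ≤ n → μ (Mset n 1) = μ (Mset n j) := by
    intro j h1 h2
    induction j with
    | zero => omega
    | succ m ih =>
      rcases Nat.lt_or_ge m 1 with h | h
      · have : m = 0 := by omega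
        rw [this]
      · have heq := ih h (by omega)
        obtain ⟨m', rfl⟩ : ∃ m', m = m' + 1 := ⟨m - 1, by omega⟩
        rw [heq, aux_M_step μ hμ_rot m' (by omega)]
  have h1 : μ (Mset n 1) = 0 := by
    rw [hchain n (by omega) le_rfl, hbase]
  have : {x : Esp n | x ⟨0, by omega⟩ = 0} = Mset n 1 := by
    ext x
    simp only [Set.mem_setOf_eq, Mset]
    constructor
    · intro h i hi
      have : i = ⟨0, by omega⟩ := by apply Fin.ext; simpa using hi
      rw [this]; exact h
    · intro h
      exact h _ (by simp)
  rw [this, h1]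

end MNull

section Uniform
variable {n : ℕ} (μ : Measure (Esp n))
variable (hμ_rot : ∀ O : Esp n ≃ₗᵢ[ℝ] Esp n, Measure.map O μ = μ)

include hμ_rot in
lemma aux_atom [IsFiniteMeasure μ] (hμ_sphere : μ (sphere (0 : Esp n) 1)ᶜ = 0)
    (hn : 2 ≤ n) (u : ℝ) : μ {x : Esp n | ⟪ev ⟨0, by omega⟩, x⟫ = u} = 0 := by
  have heq : {x : Esp n | ⟪ev ⟨0, by omega⟩, x⟫ = u} = {x : Esp n | x ⟨0, by omega⟩ = u} := by
    ext x; simp only [Set.mem_setOf_eq, ev_inner]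
  rw [heq]
  rcases eq_or_ne u 0 with rfl | hu
  · exact aux_coord_null_zero μ hμ_rot hμ_sphere hn
  · exact aux_coord_null_ne μ hμ_rot hn hu

include hμ_rot in
lemma aux_uniform [IsFiniteMeasure μ] (hμ_sphere : μ (sphere (0 : Esp n) 1)ᶜ = 0)
    (hn : 2 ≤ n) {ε : ℝ} (hε : 0 < ε) : ∃ δ : ℝ, 0 < δ ∧ ∀ c : ℝ,
    μ {x : Esp n | ⟪ev (⟨0, by omega⟩ : Fin n), x⟫ ∈ Set.Icc c (c + δ)} ≤ ENNReal.ofReal ε := by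
  set e : Esp n := ev (⟨0, by omega⟩ : Fin n) with he
  have hnorm : ‖e‖ = 1 := by
    rw [he, show ev (⟨0, by omega⟩ : Fin n) = EuclideanSpace.single _ (1:ℝ) from rfl,
      EuclideanSpace.norm_single]; norm_num
  by_contra hcon
  push_neg at hcon
  have hchoice : ∀ k : ℕ, ∃ c : ℝ, ENNReal.ofReal ε
      < μ {x : Esp n | ⟪e, x⟫ ∈ Set.Icc c (c + 1/((k:ℝ)+1))} := by
    intro k
    obtain ⟨c, hc⟩ := hcon (1/((k:ℝ)+1)) (by positivity)
    exact ⟨c, hc⟩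
  choose c hc using hchoice
  have hsl_meas : ∀ (a b : ℝ), MeasurableSet {x : Esp n | ⟪e, x⟫ ∈ Set.Icc a b} :=
    fun a b => aux_meas_inner_mem e measurableSet_Icc
  have hbound : ∀ x : Esp n, x ∈ sphere (0 : Esp n) 1 → |⟪e, x⟫| ≤ 1 := by
    intro x hx
    have h := abs_real_inner_le_norm e x
    rwa [hnorm, one_mul, mem_sphere_zero_iff_norm.1 hx] at h
  have hδ1 : ∀ k : ℕ, (1:ℝ)/((k:ℝ)+1) ≤ 1 := by
    intro k
    rw [div_le_one (by positivity)]
    linarith [Nat.cast_nonneg (α := ℝ) k]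
  have hck : ∀ k, c k ∈ Set.Icc (-2 : ℝ) 2 := by
    intro k
    have hpos : 0 < μ {x : Esp n | ⟪e, x⟫ ∈ Set.Icc (c k) (c k + 1/((k:ℝ)+1))} :=
      lt_of_le_of_lt zero_le (hc k)
    constructor
    · by_contra h
      push_neg at h
      have hsub : {x : Esp n | ⟪e, x⟫ ∈ Set.Icc (c k) (c k + 1/((k:ℝ)+1))}
          ⊆ (sphere (0:Esp n) 1)ᶜ := by
        intro x hx hxs
        have h1 := abs_le.1 (hbound x hxs)
        have h2 := hx.2
        linarith [hδ1 k, h1.1]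
      rw [measure_mono_null hsub hμ_sphere] at hpos
      exact lt_irrefl _ hpos
    · by_contra h
      push_neg at h
      have hsub : {x : Esp n | ⟪e, x⟫ ∈ Set.Icc (c k) (c k + 1/((k:ℝ)+1))}
          ⊆ (sphere (0:Esp n) 1)ᶜ := by
        intro x hx hxs
        have h1 := abs_le.1 (hbound x hxs)
        have h2 := hx.1
        linarith [h1.2]
      rw [measure_mono_null hsub hμ_sphere] at hpos
      exact lt_irrefl _ hpos
  obtain ⟨aLim, hmem, φ, hφ, hφlim⟩ := (isCompact_Icc (a := (-2:ℝ)) (b := 2)).tendsto_subseq hck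
  have hkey : ∀ η : ℝ, 0 < η → ENNReal.ofReal ε
      ≤ μ {x : Esp n | ⟪e, x⟫ ∈ Set.Icc (aLim - η) (aLim + η)} := by
    intro η hη
    have h1 : ∀ᶠ k in atTop, |c (φ k) - aLim| < η/2 := by
      have h := Metric.tendsto_atTop.1 hφlim (η/2) (by positivity)
      obtain ⟨N, hN⟩ := h
      exact eventually_atTop.2 ⟨N, fun k hk => by simpa [Real.dist_eq] using hN k hk⟩
    have h2 : ∀ᶠ k in atTop, (1:ℝ)/((φ k : ℝ)+1) < η/2 := by
      refine eventually_atTop.2 ⟨⌈2/η⌉₊ + 1, fun k hk => ?_⟩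
      have hφk : k ≤ φ k := hφ.le_apply
      have hk2 : 2/η < (k:ℝ) := by
        calc 2/η ≤ (⌈2/η⌉₊ : ℝ) := Nat.le_ceil _
          _ < (k:ℝ) := by exact_mod_cast Nat.lt_of_lt_of_le (Nat.lt_succ_self _) hk
      have hφk' : 2/η < (φ k : ℝ) + 1 := by
        have : (k:ℝ) ≤ (φ k : ℝ) := by exact_mod_cast hφk
        linarith
      rw [div_lt_iff₀ (by positivity)]
      rw [div_lt_iff₀ hη] at hφk'
      nlinarith
    obtain ⟨k, hk1, hk2⟩ := (h1.and h2).exists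
    refine le_trans (hc (φ k)).le (measure_mono ?_)
    rintro x ⟨hxl, hxr⟩
    have habs := abs_lt.1 hk1
    constructor
    · linarith
    · linarith
  have hA : ∀ m : ℕ, ENNReal.ofReal ε ≤ μ {x : Esp n | ⟪e, x⟫
      ∈ Set.Icc (aLim - 1/((m:ℝ)+1)) (aLim + 1/((m:ℝ)+1))} :=
    fun m => hkey _ (by positivity)
  have hInt : (⋂ m : ℕ, {x : Esp n | ⟪e, x⟫ ∈ Set.Icc (aLim - 1/((m:ℝ)+1)) (aLim + 1/((m:ℝ)+1))})
      = {x : Esp n | ⟪e, x⟫ = aLim} := by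
    ext x
    simp only [Set.mem_iInter, Set.mem_setOf_eq, Set.mem_Icc]
    constructor
    · intro h
      by_contra hne
      have habs : 0 < |⟪e,x⟫ - aLim| := abs_pos.2 (sub_ne_zero.2 hne)
      obtain ⟨m, hm⟩ := exists_nat_one_div_lt habs
      have h1 := (h m).1
      have h2 := (h m).2
      have habs2 : |⟪e,x⟫ - aLim| ≤ 1/((m:ℝ)+1) := abs_le.2 ⟨by linarith, by linarith⟩
      linarith
    · intro h m
      have hp : 0 < 1/((m:ℝ)+1) := by positivity
      exact ⟨by rw [h]; linarith, by rw [h]; linarith⟩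
  have hanti : Antitone (fun m : ℕ => {x : Esp n | ⟪e, x⟫
      ∈ Set.Icc (aLim - 1/((m:ℝ)+1)) (aLim + 1/((m:ℝ)+1))}) := by
    intro m m' hmm x hx
    have hle : (1:ℝ)/((m':ℝ)+1) ≤ 1/((m:ℝ)+1) := by
      apply div_le_div_of_nonneg_left (by norm_num) (by positivity)
      have : (m:ℝ) ≤ (m':ℝ) := by exact_mod_cast hmm
      linarith
    exact ⟨by linarith [hx.1], by linarith [hx.2]⟩
  have hlim := tendsto_measure_iInter_atTop
    (fun m => (hsl_meas _ _).nullMeasurableSet) hanti ⟨0, measure_ne_top μ _⟩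
  have hge : ENNReal.ofReal ε ≤ μ (⋂ m : ℕ, {x : Esp n | ⟪e, x⟫
      ∈ Set.Icc (aLim - 1/((m:ℝ)+1)) (aLim + 1/((m:ℝ)+1))}) :=
    ge_of_tendsto hlim (eventually_atTop.2 ⟨0, fun m _ => hA m⟩)
  rw [hInt, aux_atom μ hμ_rot hμ_sphere hn aLim] at hge
  have : (0:ℝ≥0∞) < ENNReal.ofReal ε := by
    rw [ENNReal.ofReal_pos]; exact hε
  exact absurd (le_antisymm hge zero_le) this.ne'
end Uniform

open scoped FourierTransform NNReal

lemma aux_norm_exp (r : ℝ) : ‖Complex.exp (-(2 * Real.pi * Complex.I) * (r:ℂ))‖ = 1 := by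
  rw [Complex.norm_exp]
  have : (-(2 * Real.pi * Complex.I) * (r:ℂ)).re = 0 := by
    simp [Complex.mul_re]
  rw [this, Real.exp_zero]

section Analysis
variable {n : ℕ} {μ : Measure (Esp n)} [IsProbabilityMeasure μ] {a : ℝ → ℝ}

lemma aux_g_cont (ha_smooth : ContDiff ℝ (⊤ : ℕ∞) a) :
    Continuous (fun s : ℝ => s ^ (n - 1) * a s) :=
  (continuous_pow (n-1)).mul ha_smooth.continuous

lemma aux_g_zero (ha_supp : Function.support a ⊆ Set.Icc (1 / 2 : ℝ) 2) :
    ∀ s : ℝ, s ∉ Set.Icc (1/2 : ℝ) 2 → s ^ (n - 1) * a s = 0 := by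
  intro s hs
  have : a s = 0 := by
    by_contra h
    exact hs (ha_supp h)
  rw [this, mul_zero]

lemma aux_g_nonneg (ha_nonneg : ∀ s, 0 ≤ a s)
    (ha_supp : Function.support a ⊆ Set.Icc (1 / 2 : ℝ) 2) :
    ∀ s : ℝ, 0 ≤ s ^ (n - 1) * a s := by
  intro s
  by_cases h : a s = 0
  · rw [h, mul_zero]
  · have hs : s ∈ Set.Icc (1/2 : ℝ) 2 := ha_supp h
    have : (0:ℝ) ≤ s := le_trans (by norm_num) hs.1
    exact mul_nonneg (pow_nonneg this _) (ha_nonneg s)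

end Analysis


set_option maxHeartbeats 1000000 in
/-- **The light cone is an `M₁`-set.** The measure `ν` is a nonzero finite Borel measure
concentrated on the light cone `B = {(x,t) : |x| = t}`, and its Fourier transform belongs
to `C₀(ℝ^{n+1})`. -/
theorem coneMeasure_nonzero_finite_fourier_zero_at_infty (n : ℕ) (hn : 2 ≤ n)
    (μ : Measure (EuclideanSpace ℝ (Fin n))) [IsProbabilityMeasure μ]
    (hμ_sphere : μ (sphere (0 : EuclideanSpace ℝ (Fin n)) 1)ᶜ = 0)
    (hμ_rot : ∀ O : EuclideanSpace ℝ (Fin n) ≃ₗᵢ[ℝ] EuclideanSpace ℝ (Fin n),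
      Measure.map O μ = μ)
    (a : ℝ → ℝ) (ha_smooth : ContDiff ℝ (⊤ : ℕ∞) a) (ha_nonneg : ∀ s, 0 ≤ a s)
    (ha_ne : a ≠ 0) (ha_supp : Function.support a ⊆ Set.Icc (1 / 2 : ℝ) 2) :
    coneMeasure n μ a ≠ 0 ∧
    IsFiniteMeasure (coneMeasure n μ a) ∧
    coneMeasure n μ a {p : EuclideanSpace ℝ (Fin n) × ℝ | ‖p.1‖ = p.2}ᶜ = 0 ∧
    Continuous (fourierMeasureProd n (coneMeasure n μ a)) ∧
    Tendsto (fourierMeasureProd n (coneMeasure n μ a))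
      (cocompact (EuclideanSpace ℝ (Fin n) × ℝ)) (𝓝 0) := by
  set g : ℝ → ℝ := fun s => s ^ (n - 1) * a s with hgdef
  set ρ : Measure ℝ :=
    (volume.restrict (Set.Ioi (0:ℝ))).withDensity (fun s => ENNReal.ofReal (g s)) with hρdef
  set Φ : Esp n × ℝ → Esp n × ℝ := fun p => (p.2 • p.1, p.2) with hΦdef
  have hΦc : Continuous Φ := (continuous_snd.smul continuous_fst).prodMk continuous_snd
  have hcone : coneMeasure n μ a = Measure.map Φ (μ.prod ρ) := rfl
  have hgc : Continuous g := aux_g_cont ha_smooth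
  have hg0 : ∀ s : ℝ, s ∉ Set.Icc (1/2 : ℝ) 2 → g s = 0 := aux_g_zero ha_supp
  have hgnn : ∀ s, 0 ≤ g s := aux_g_nonneg ha_nonneg ha_supp
  have hgcs : HasCompactSupport g := HasCompactSupport.intro isCompact_Icc hg0
  have hgint : Integrable g := hgc.integrable_of_hasCompactSupport hgcs
  haveI hρfin : IsFiniteMeasure ρ := by
    constructor
    rw [hρdef, withDensity_apply _ MeasurableSet.univ, setLIntegral_univ]
    calc ∫⁻ s, ENNReal.ofReal (g s) ∂(volume.restrict (Set.Ioi (0:ℝ)))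
        ≤ ∫⁻ s, ENNReal.ofReal (g s) ∂volume :=
          lintegral_mono' Measure.restrict_le_self le_rfl
      _ < ⊤ := hgint.lintegral_lt_top
  have hρuniv : ρ Set.univ = ∫⁻ s, ENNReal.ofReal (g s) ∂(volume.restrict (Set.Ioi (0:ℝ))) := by
    rw [hρdef, withDensity_apply _ MeasurableSet.univ, setLIntegral_univ]
  have hρpos : 0 < ρ Set.univ := by
    rw [hρuniv]
    rw [lintegral_pos_iff_support (hgc.measurable.ennreal_ofReal)]
    have hsupp : Function.support (fun s => ENNReal.ofReal (g s)) = {s : ℝ | 0 < g s} := by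
      ext s
      simp only [Function.mem_support, ne_eq, Set.mem_setOf_eq, ENNReal.ofReal_eq_zero, not_le]
    rw [hsupp]
    have hopen : IsOpen {s : ℝ | 0 < g s} := isOpen_lt continuous_const hgc
    have hsub : {s : ℝ | 0 < g s} ⊆ Set.Ioi (0:ℝ) := by
      intro s hs
      have has : a s ≠ 0 := by
        intro h
        simp only [Set.mem_setOf_eq, hgdef, h, mul_zero] at hs
        exact lt_irrefl _ hs
      have := ha_supp has
      exact lt_of_lt_of_le (by norm_num) this.1
    have hne : {s : ℝ | 0 < g s}.Nonempty := by
      obtain ⟨s₀, hs₀⟩ := Function.ne_iff.1 ha_ne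
      have has : a s₀ ≠ 0 := hs₀
      have hmem := ha_supp has
      have hapos : 0 < a s₀ := lt_of_le_of_ne (ha_nonneg s₀) (Ne.symm has)
      have hspos : (0:ℝ) < s₀ := lt_of_lt_of_le (by norm_num) hmem.1
      exact ⟨s₀, mul_pos (pow_pos hspos _) hapos⟩
    rw [Measure.restrict_apply' measurableSet_Ioi]
    rw [Set.inter_eq_self_of_subset_left hsub]
    exact hopen.measure_pos volume hne
  have hconeuniv : coneMeasure n μ a Set.univ = ρ Set.univ := by
    rw [hcone, Measure.map_apply hΦc.measurable MeasurableSet.univ, Set.preimage_univ,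
      ← Set.univ_prod_univ, Measure.prod_prod, measure_univ, one_mul]
  have part1 : coneMeasure n μ a ≠ 0 := by
    intro h
    rw [h] at hconeuniv
    simp only [Measure.coe_zero, Pi.zero_apply] at hconeuniv
    exact hρpos.ne hconeuniv
  have part2 : IsFiniteMeasure (coneMeasure n μ a) := by
    constructor
    rw [hconeuniv]
    exact measure_lt_top ρ _
  have part3 : coneMeasure n μ a {p : EuclideanSpace ℝ (Fin n) × ℝ | ‖p.1‖ = p.2}ᶜ = 0 := by
    have hmeasB : MeasurableSet {p : Esp n × ℝ | ‖p.1‖ = p.2} :=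
      (isClosed_eq (continuous_norm.comp continuous_fst) continuous_snd).measurableSet
    rw [hcone, Measure.map_apply hΦc.measurable hmeasB.compl]
    have hρIoi : ρ (Set.Ioi (0:ℝ))ᶜ = 0 := by
      rw [hρdef, withDensity_apply _ measurableSet_Ioi.compl,
        Measure.restrict_restrict measurableSet_Ioi.compl, Set.compl_inter_self,
        Measure.restrict_empty, lintegral_zero_measure]
    have hsub : Φ ⁻¹' {p : Esp n × ℝ | ‖p.1‖ = p.2}ᶜ
        ⊆ ((sphere (0 : Esp n) 1)ᶜ ×ˢ Set.univ) ∪ (Set.univ ×ˢ (Set.Ioi (0:ℝ))ᶜ) := by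
      rintro ⟨x, s⟩ hp
      simp only [Set.mem_preimage, Set.mem_compl_iff, Set.mem_setOf_eq, hΦdef] at hp
      by_contra hcon
      simp only [Set.mem_union, Set.mem_prod, Set.mem_univ, and_true, true_and,
        Set.mem_compl_iff, not_or, not_not] at hcon
      obtain ⟨hx, hs⟩ := hcon
      apply hp
      rw [norm_smul, mem_sphere_zero_iff_norm.1 hx, mul_one, Real.norm_eq_abs,
        abs_of_pos hs]
    refine measure_mono_null hsub (le_antisymm ?_ zero_le)
    calc (μ.prod ρ) (((sphere (0 : Esp n) 1)ᶜ ×ˢ Set.univ) ∪ (Set.univ ×ˢ (Set.Ioi (0:ℝ))ᶜ))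
        ≤ (μ.prod ρ) ((sphere (0 : Esp n) 1)ᶜ ×ˢ Set.univ)
          + (μ.prod ρ) (Set.univ ×ˢ (Set.Ioi (0:ℝ))ᶜ) := measure_union_le _ _
      _ = 0 := by
          rw [Measure.prod_prod, Measure.prod_prod, hμ_sphere, hρIoi, zero_mul, mul_zero,
            add_zero]
  haveI := part2
  -- continuity of the Fourier transform
  have part4 : Continuous (fourierMeasureProd n (coneMeasure n μ a)) := by
    show Continuous fun q : Esp n × ℝ => ∫ p,
      Complex.exp (-(2 * Real.pi * Complex.I) * ((⟪q.1, p.1⟫ + q.2 * p.2 : ℝ) : ℂ))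
      ∂(coneMeasure n μ a)
    apply continuous_of_dominated (bound := fun _ => (1:ℝ))
    · intro q
      apply Continuous.aestronglyMeasurable
      exact Complex.continuous_exp.comp (continuous_const.mul
        (Complex.continuous_ofReal.comp
          ((continuous_const.inner continuous_fst).add
            (continuous_const.mul continuous_snd))))
    · intro q
      refine Filter.Eventually.of_forall fun p => ?_
      rw [aux_norm_exp]
    · exact integrable_const 1
    · refine Filter.Eventually.of_forall fun p => ?_
      exact Complex.continuous_exp.comp (continuous_const.mul
        (Complex.continuous_ofReal.comp
          ((continuous_fst.inner continuous_const).add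
            (continuous_snd.mul continuous_const))))
  -- Fourier representation
  set F : ℝ → ℂ := 𝓕 (fun s => (g s : ℂ)) with hFdef
  have hgCint : Integrable (fun s => (g s : ℂ)) := hgint.ofReal
  have hinner_int : ∀ u : ℝ,
      (∫ s, Complex.exp (-(2 * Real.pi * Complex.I) * ((s * u : ℝ) : ℂ)) ∂ρ) = F u := by
    intro u
    have hmeasnn : AEMeasurable (fun s => Real.toNNReal (g s))
        (volume.restrict (Set.Ioi (0:ℝ))) :=
      (measurable_real_toNNReal.comp hgc.measurable).aemeasurable
    rw [hρdef,
      show (fun s => ENNReal.ofReal (g s))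
        = (fun s => ((Real.toNNReal (g s) : ℝ≥0) : ℝ≥0∞)) from rfl,
      integral_withDensity_eq_integral_smul₀ hmeasnn _]
    have hvanish : ∀ s ∉ Set.Ioi (0:ℝ),
        Real.toNNReal (g s) • Complex.exp (-(2 * Real.pi * Complex.I) * ((s * u : ℝ) : ℂ))
        = 0 := by
      intro s hs
      have : g s = 0 := hg0 s (fun hmem => hs (lt_of_lt_of_le (by norm_num) hmem.1))
      rw [this]
      simp
    rw [setIntegral_eq_integral_of_forall_compl_eq_zero hvanish,
      hFdef, Real.fourier_real_eq_integral_exp_smul]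
    refine integral_congr_ae (Filter.Eventually.of_forall fun s => ?_)
    dsimp only
    rw [NNReal.smul_def, Real.coe_toNNReal _ (hgnn s), Complex.real_smul, smul_eq_mul,
      mul_comm]
    congr 1
    push_cast
    ring
  have hnu : ∀ q : Esp n × ℝ, fourierMeasureProd n (coneMeasure n μ a) q
      = ∫ x, F (⟪q.1, x⟫ + q.2) ∂μ := by
    intro q
    have hcontp : Continuous fun p : Esp n × ℝ =>
        Complex.exp (-(2 * Real.pi * Complex.I) * ((⟪q.1, p.1⟫ + q.2 * p.2 : ℝ) : ℂ)) :=
      Complex.continuous_exp.comp (continuous_const.mul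
        (Complex.continuous_ofReal.comp
          ((continuous_const.inner continuous_fst).add
            (continuous_const.mul continuous_snd))))
    have hIntq : Integrable (fun p : Esp n × ℝ =>
        Complex.exp (-(2 * Real.pi * Complex.I)
          * ((⟪q.1, (Φ p).1⟫ + q.2 * (Φ p).2 : ℝ) : ℂ))) (μ.prod ρ) := by
      refine (integrable_const (1:ℝ)).mono'
        ((hcontp.comp hΦc).aestronglyMeasurable)
        (Filter.Eventually.of_forall fun p => ?_)
      rw [aux_norm_exp]
    calc fourierMeasureProd n (coneMeasure n μ a) q
        = ∫ p, Complex.exp (-(2 * Real.pi * Complex.I)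
            * ((⟪q.1, p.1⟫ + q.2 * p.2 : ℝ) : ℂ)) ∂(Measure.map Φ (μ.prod ρ)) := by
          rw [fourierMeasureProd, hcone]
      _ = ∫ p, Complex.exp (-(2 * Real.pi * Complex.I)
            * ((⟪q.1, (Φ p).1⟫ + q.2 * (Φ p).2 : ℝ) : ℂ)) ∂(μ.prod ρ) :=
          integral_map hΦc.aemeasurable hcontp.aestronglyMeasurable
      _ = ∫ x, ∫ s, Complex.exp (-(2 * Real.pi * Complex.I)
            * ((⟪q.1, s • x⟫ + q.2 * s : ℝ) : ℂ)) ∂ρ ∂μ := integral_prod _ hIntq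
      _ = ∫ x, F (⟪q.1, x⟫ + q.2) ∂μ := by
          refine integral_congr_ae (Filter.Eventually.of_forall fun x => ?_)
          dsimp only
          rw [← hinner_int (⟪q.1, x⟫ + q.2)]
          refine integral_congr_ae (Filter.Eventually.of_forall fun s => ?_)
          dsimp only
          congr 2
          rw [real_inner_smul_right]
          ring
  -- bounds on F
  set I0 : ℝ := ∫ s, ‖(g s : ℂ)‖ with hI0def
  have hI0nn : 0 ≤ I0 := integral_nonneg fun _ => norm_nonneg _
  set M : ℝ := I0 + 1 with hMdef
  have hM : 0 < M := by positivity
  have hFM : ∀ u, ‖F u‖ ≤ M := by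
    intro u
    have := VectorFourier.norm_fourierIntegral_le_integral_norm
      Real.fourierChar volume (innerₗ ℝ) (fun s => (g s : ℂ)) u
    calc ‖F u‖ ≤ I0 := this
      _ ≤ M := by rw [hMdef]; linarith
  have hFcont : Continuous F :=
    VectorFourier.fourierIntegral_continuous (L := innerₗ ℝ) Real.continuous_fourierChar
      (by exact continuous_inner) hgCint
  have hF0 : Tendsto F (cocompact ℝ) (𝓝 0) :=
    Real.zero_at_infty_fourier (fun s => (g s : ℂ))
  have hae : ∀ᵐ x ∂μ, ‖x‖ = 1 := by
    rw [ae_iff]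
    have : {x : Esp n | ¬ ‖x‖ = 1} = (sphere (0 : Esp n) 1)ᶜ := by
      ext x
      simp [mem_sphere_zero_iff_norm]
    rw [this]
    exact hμ_sphere
  have he0norm : ‖ev (⟨0, by omega⟩ : Fin n)‖ = 1 := by
    rw [show ev (⟨0, by omega⟩ : Fin n) = EuclideanSpace.single _ (1:ℝ) from rfl,
      EuclideanSpace.norm_single]
    norm_num
  -- main quantitative bound
  have main : ∀ ε : ℝ, 0 < ε → ∃ r : ℝ, ∀ q : Esp n × ℝ, r ≤ ‖q‖ →
      ‖∫ x, F (⟪q.1, x⟫ + q.2) ∂μ‖ ≤ ε := by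
    intro ε hε
    -- R such that F is small outside [-R, R]
    obtain ⟨R, hRpos, hRsmall⟩ : ∃ R : ℝ, 0 < R ∧ ∀ u : ℝ, R ≤ |u| → ‖F u‖ ≤ ε/2 := by
      have hev : ∀ᶠ u in cocompact ℝ, ‖F u‖ ≤ ε/2 := by
        filter_upwards [Metric.tendsto_nhds.1 hF0 (ε/2) (by positivity)] with u hu
        rw [dist_zero_right] at hu
        exact hu.le
      obtain ⟨K, hK, hKsub⟩ := hasBasis_cocompact.eventually_iff.1 hev
      obtain ⟨R0, hR0⟩ := hK.isBounded.subset_closedBall 0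
      refine ⟨max R0 0 + 1, by positivity, fun u hu => ?_⟩
      apply hKsub
      intro hmem
      have h1 : |u| ≤ R0 := by
        have := hR0 hmem
        rwa [Metric.mem_closedBall, Real.dist_eq, sub_zero] at this
      have h2 : R0 ≤ max R0 0 := le_max_left _ _
      linarith
    obtain ⟨δ, hδpos, hδ⟩ := aux_uniform μ hμ_rot hμ_sphere hn
      (show (0:ℝ) < ε/(2*M) by positivity)
    refine ⟨max (4*R + 4) (8*R/δ), fun q hq => ?_⟩
    have hrpos : (0:ℝ) < max (4*R + 4) (8*R/δ) :=
      lt_of_lt_of_le (by linarith) (le_max_left _ _)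
    have hmax : max (4*R + 4) (8*R/δ) ≤ max ‖q.1‖ |q.2| := by
      have : ‖q‖ = max ‖q.1‖ ‖q.2‖ := Prod.norm_def q
      rw [this, Real.norm_eq_abs] at hq
      exact hq
    have hcomp_cont : Continuous fun x : Esp n => F (⟪q.1, x⟫ + q.2) :=
      hFcont.comp ((continuous_const.inner continuous_id).add continuous_const)
    have hIntF : Integrable (fun x : Esp n => ‖F (⟪q.1, x⟫ + q.2)‖) μ :=
      (integrable_const M).mono' hcomp_cont.norm.aestronglyMeasurable
        (Filter.Eventually.of_forall fun x => by rw [norm_norm]; exact hFM _)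
    rcases le_or_gt ‖q.1‖ (|q.2|/2) with hcase | hcase
    · -- |t| dominates
      have ht : 4*R + 4 ≤ |q.2| := by
        have h0 : 4*R + 4 ≤ max (4*R + 4) (8*R/δ) := le_max_left _ _
        have habs : (0:ℝ) ≤ |q.2| := abs_nonneg _
        rcases le_max_iff.1 hmax with h | h
        · linarith
        · linarith
      have hptw : ∀ᵐ x ∂μ, ‖F (⟪q.1, x⟫ + q.2)‖ ≤ ε/2 := by
        filter_upwards [hae] with x hx
        apply hRsmall
        have h1 : |⟪q.1, x⟫| ≤ ‖q.1‖ := by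
          have := abs_real_inner_le_norm q.1 x
          rwa [hx, mul_one] at this
        have h2 : |q.2| ≤ |⟪q.1, x⟫ + q.2| + |⟪q.1, x⟫| := by
          calc |q.2| = |(⟪q.1, x⟫ + q.2) + (-⟪q.1, x⟫)| := by congr 1; ring
            _ ≤ |⟪q.1, x⟫ + q.2| + |(-⟪q.1, x⟫)| := abs_add_le _ _
            _ = |⟪q.1, x⟫ + q.2| + |⟪q.1, x⟫| := by rw [abs_neg]
        linarith
      calc ‖∫ x, F (⟪q.1, x⟫ + q.2) ∂μ‖ ≤ ∫ x, ‖F (⟪q.1, x⟫ + q.2)‖ ∂μ :=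
            norm_integral_le_integral_norm _
        _ ≤ ∫ _x, (ε/2 : ℝ) ∂μ := integral_mono_ae hIntF (integrable_const _) hptw
        _ = ε/2 := by simp [measure_univ]
        _ ≤ ε := by linarith
    · -- ‖y‖ dominates
      have hrle : max (4*R + 4) (8*R/δ) ≤ 2*‖q.1‖ := by
        have hyn : (0:ℝ) ≤ ‖q.1‖ := norm_nonneg _
        rcases le_max_iff.1 hmax with h | h
        · linarith
        · linarith
      have hy1 : 4*R/δ ≤ ‖q.1‖ := by
        have h0 : 8*R/δ ≤ max (4*R + 4) (8*R/δ) := le_max_right _ _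
        have h1 : (8*R/δ : ℝ) = 2*(4*R/δ) := by ring
        linarith
      have hy2 : 2*R + 2 ≤ ‖q.1‖ := by
        have h0 : 4*R + 4 ≤ max (4*R + 4) (8*R/δ) := le_max_left _ _
        linarith
      have hypos : (0:ℝ) < ‖q.1‖ := by linarith
      have hy0 : q.1 ≠ 0 := by
        intro h
        rw [h, norm_zero] at hypos
        exact lt_irrefl _ hypos
      have hRy : 2*R/‖q.1‖ ≤ δ := by
        have h1 : δ * (4*R/δ) = 4*R := by field_simp
        have h2 : δ * (4*R/δ) ≤ δ * ‖q.1‖ :=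
          mul_le_mul_of_nonneg_left hy1 hδpos.le
        rw [div_le_iff₀ hypos]
        linarith
      set e : Esp n := (‖q.1‖⁻¹ : ℝ) • q.1 with hedef
      have hnorme : ‖e‖ = 1 := norm_smul_inv_norm hy0
      have hein : ∀ x : Esp n, ⟪e, x⟫ = ⟪q.1, x⟫ / ‖q.1‖ := by
        intro x
        rw [hedef, real_inner_smul_left, div_eq_inv_mul]
      set c : ℝ := (-R - q.2)/‖q.1‖ with hcdef
      set Sm : Set (Esp n) := {x | ⟪e, x⟫ ∈ Set.Icc c (c + δ)} with hSmdef
      have hSmeas : MeasurableSet Sm := aux_meas_inner_mem e measurableSet_Icc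
      have hSbound : μ Sm ≤ ENNReal.ofReal (ε/(2*M)) := by
        rw [hSmdef, Hset_inv μ hμ_rot hnorme he0norm measurableSet_Icc]
        exact hδ c
      have hptw : ∀ x : Esp n,
          ‖F (⟪q.1, x⟫ + q.2)‖ ≤ ε/2 + Set.indicator Sm (fun _ => M) x := by
        intro x
        by_cases hx : x ∈ Sm
        · rw [Set.indicator_of_mem hx]
          have := hFM (⟪q.1, x⟫ + q.2)
          linarith
        · rw [Set.indicator_of_notMem hx, add_zero]
          apply hRsmall
          by_contra habs
          push_neg at habs
          obtain ⟨ha1, ha2⟩ := abs_lt.1 habs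
          apply hx
          rw [hSmdef]
          constructor
          · rw [hein x, hcdef]
            gcongr
            linarith
          · rw [hein x]
            have h1 : ⟪q.1, x⟫ / ‖q.1‖ ≤ (R - q.2)/‖q.1‖ := by
              gcongr
              linarith
            have h2 : (R - q.2)/‖q.1‖ = c + 2*R/‖q.1‖ := by
              rw [hcdef]
              field_simp
              ring
            linarith
      have hIndInt : Integrable (Set.indicator Sm fun _ => M) μ :=
        (integrable_const M).indicator hSmeas
      calc ‖∫ x, F (⟪q.1, x⟫ + q.2) ∂μ‖
          ≤ ∫ x, ‖F (⟪q.1, x⟫ + q.2)‖ ∂μ := norm_integral_le_integral_norm _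
        _ ≤ ∫ x, (ε/2 + Set.indicator Sm (fun _ => M) x) ∂μ :=
            integral_mono_ae hIntF ((integrable_const _).add hIndInt)
              (Filter.Eventually.of_forall hptw)
        _ = ε/2 + M * (μ Sm).toReal := by
            rw [integral_add (integrable_const _) hIndInt, integral_const,
              integral_indicator_const _ hSmeas, probReal_univ, measureReal_def,
              one_smul, smul_eq_mul, mul_comm]
        _ ≤ ε/2 + M * (ε/(2*M)) := by
            have h1 : (μ Sm).toReal ≤ ε/(2*M) :=
              ENNReal.toReal_le_of_le_ofReal (by positivity) hSbound
            have := mul_le_mul_of_nonneg_left h1 hM.le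
            linarith
        _ = ε := by
            have hM0 : M ≠ 0 := hM.ne'
            field_simp
            ring
  -- conclude
  have hfun : fourierMeasureProd n (coneMeasure n μ a)
      = fun q => ∫ x, F (⟪q.1, x⟫ + q.2) ∂μ := funext hnu
  refine ⟨part1, part2, part3, part4, ?_⟩
  rw [hfun]
  rw [Metric.tendsto_nhds]
  intro ε hε
  obtain ⟨r, hr⟩ := main (ε/2) (by positivity)
  refine hasBasis_cocompact.eventually_iff.2
    ⟨closedBall 0 (max r 0), isCompact_closedBall _ _, fun q hq => ?_⟩
  rw [dist_zero_right]
  have hqn : r ≤ ‖q‖ := by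
    by_contra h
    push_neg at h
    apply hq
    rw [Metric.mem_closedBall, dist_zero_right]
    exact le_trans h.le (le_max_left _ _)
  calc ‖∫ x, F (⟪q.1, x⟫ + q.2) ∂μ‖ ≤ ε/2 := hr q hqn
    _ < ε := by linarith
end

section
/- Let d, m ≥ 1 and let A₁,…,A_m and B₁,…,B_m be complex d×d matrices such that each A_i and each B_i is normal, A_iA_j = A_jA_i for all i,j, and B_iB_j = B_jB_i for all i,j. Then for every complex d×d matrix T, Σ_{i=1}^m A_i T B_i = 0 if and only if Σ_{i=1}^m A_i* T B_i* = 0, where A* denotes the conjugate transpose. -/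
/-!
With respect to the Frobenius form `⟪X, Y⟫ = tr (Xᴴ Y)`, the map `Δ T = ∑ Aᵢ T Bᵢ` has adjoint
`Δ̃ T = ∑ Aᵢᴴ T Bᵢᴴ`. By Fuglede's theorem each `Aᵢᴴ` commutes with every `Aⱼ` (and likewise for
the `Bᵢ`), which makes `Δ` normal, so `‖Δ T‖ = ‖Δ̃ T‖`: expanding both squared norms gives the same
double sum of traces, term by term after exchanging `i` and `j`.
-/

open Matrix
open scoped ComplexOrder

namespace Matrix

variable {n ι R : Type*} [Fintype n] [Fintype ι]

section CommSemiring

variable [CommSemiring R] [StarRing R]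

lemma trace_conjTranspose_sum_mul_sum (X Y : ι → Matrix n n R) :
    trace ((∑ i, X i)ᴴ * ∑ j, Y j) = ∑ i, ∑ j, trace ((X i)ᴴ * Y j) := by
  simp only [conjTranspose_sum, Finset.sum_mul, Finset.mul_sum, trace_sum]
  exact Finset.sum_comm

lemma trace_conjTranspose_mul_mul_comm_swap {P Q U V : Matrix n n R}
    (hPU : Commute Pᴴ U) (hQV : Commute Qᴴ V) (T : Matrix n n R) :
    trace ((P * T * Q)ᴴ * (U * T * V)) = trace ((Uᴴ * T * Vᴴ)ᴴ * (Pᴴ * T * Qᴴ)) := by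
  simp only [conjTranspose_mul, conjTranspose_conjTranspose]
  calc trace (Qᴴ * (Tᴴ * Pᴴ) * (U * T * V))
      = trace (Tᴴ * (Pᴴ * U) * T * (V * Qᴴ)) := by
        simp only [Matrix.mul_assoc]; rw [trace_mul_comm Qᴴ]; simp only [Matrix.mul_assoc]
    _ = trace (Tᴴ * (U * Pᴴ) * T * (Qᴴ * V)) := by rw [hPU.eq, hQV.eq]
    _ = trace (V * (Tᴴ * U) * (Pᴴ * T * Qᴴ)) := by
        simp only [Matrix.mul_assoc]; rw [trace_mul_comm V]; simp only [Matrix.mul_assoc]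

lemma trace_conjTranspose_mul_self_sum_eq_of_commute {A B : ι → Matrix n n R}
    (hA : ∀ i j, Commute (A i)ᴴ (A j)) (hB : ∀ i j, Commute (B i)ᴴ (B j))
    (T : Matrix n n R) :
    trace ((∑ i, A i * T * B i)ᴴ * ∑ i, A i * T * B i) =
      trace ((∑ i, (A i)ᴴ * T * (B i)ᴴ)ᴴ * ∑ i, (A i)ᴴ * T * (B i)ᴴ) := by
  rw [trace_conjTranspose_sum_mul_sum, trace_conjTranspose_sum_mul_sum]
  conv_rhs => rw [Finset.sum_comm]
  exact Finset.sum_congr rfl fun i _ ↦ Finset.sum_congr rfl fun j _ ↦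
    trace_conjTranspose_mul_mul_comm_swap (hA i j) (hB i j) T

end CommSemiring

lemma sum_mul_mul_eq_zero_iff_sum_conjTranspose_of_commute [CommRing R] [StarRing R]
    [PartialOrder R] [StarOrderedRing R] [NoZeroDivisors R] {A B : ι → Matrix n n R}
    (hA : ∀ i j, Commute (A i)ᴴ (A j)) (hB : ∀ i j, Commute (B i)ᴴ (B j))
    (T : Matrix n n R) :
    ∑ i, A i * T * B i = 0 ↔ ∑ i, (A i)ᴴ * T * (B i)ᴴ = 0 := by
  rw [← trace_conjTranspose_mul_self_eq_zero_iff, ← trace_conjTranspose_mul_self_eq_zero_iff,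
    trace_conjTranspose_mul_self_sum_eq_of_commute hA hB]

open scoped Matrix.Norms.L2Operator in
lemma commute_conjTranspose_of_commute {N M : Matrix n n ℂ} [DecidableEq n]
    (hN : Nᴴ * N = N * Nᴴ) (h : Commute N M) : Commute Nᴴ M :=
  IsStarNormal.commute_star_left ⟨hN⟩ h

end Matrix

theorem matrix_generalized_fuglede_putnam_general (d m : ℕ)
    (A B : Fin m → Matrix (Fin d) (Fin d) ℂ)
    (hA_normal : ∀ i, (A i)ᴴ * A i = A i * (A i)ᴴ)
    (hB_normal : ∀ i, (B i)ᴴ * B i = B i * (B i)ᴴ)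
    (hA_comm : ∀ i j, A i * A j = A j * A i)
    (hB_comm : ∀ i j, B i * B j = B j * B i)
    (T : Matrix (Fin d) (Fin d) ℂ) :
    (∑ i, A i * T * B i) = 0 ↔ (∑ i, (A i)ᴴ * T * (B i)ᴴ) = 0 :=
  sum_mul_mul_eq_zero_iff_sum_conjTranspose_of_commute
    (fun i j ↦ commute_conjTranspose_of_commute (hA_normal i) (hA_comm i j))
    (fun i j ↦ commute_conjTranspose_of_commute (hB_normal i) (hB_comm i j)) T

/-- **The finite-dimensional generalized Fuglede–Putnam theorem.**
If `A₁,…,A_m` and `B₁,…,B_m` are commuting families of normal complex `d × d` matrices,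
then for every matrix `T`, `∑ Aᵢ T Bᵢ = 0` if and only if `∑ Aᵢᴴ T Bᵢᴴ = 0`. -/
theorem matrix_generalized_fuglede_putnam (d m : ℕ) (hd : 1 ≤ d) (hm : 1 ≤ m)
    (A B : Fin m → Matrix (Fin d) (Fin d) ℂ)
    (hA_normal : ∀ i, (A i)ᴴ * A i = A i * (A i)ᴴ)
    (hB_normal : ∀ i, (B i)ᴴ * B i = B i * (B i)ᴴ)
    (hA_comm : ∀ i j, A i * A j = A j * A i)
    (hB_comm : ∀ i j, B i * B j = B j * B i)
    (T : Matrix (Fin d) (Fin d) ℂ) :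
    (∑ i, A i * T * B i) = 0 ↔ (∑ i, (A i)ᴴ * T * (B i)ᴴ) = 0 :=
  matrix_generalized_fuglede_putnam_general d m A B hA_normal hB_normal hA_comm hB_comm T
end
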